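/- The square root of the Jensen–Shannon divergence satisfies the triangle inequality: for any three probability densities p, q, r on a measure space (Ω, μ), d_JS(p,r) ≤ d_JS(p,q) + d_JS(q,r). -/

import Mathlib

open MeasureTheory

/-- A probability density on `(Ω, μ)`: nonnegative, measurable, integrating to 1. -/
def IsProbDensity {Ω : Type*} [MeasurableSpace Ω] (μ : Measure Ω) (p : Ω → ℝ) : Prop :=
  Measurable p ∧ (∀ x, 0 ≤ p x) ∧ ∫ x, p x ∂μ = 1

/-- Kullback–Leibler divergence between densities. -/
noncomputable def KLdiv {Ω : Type*} [MeasurableSpace Ω] (μ : Measure Ω) (p q : Ω → ℝ) : ℝ :=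
  ∫ x, p x * Real.log (p x / q x) ∂μ

/-- Jensen–Shannon divergence between densities. -/
noncomputable def JSdiv {Ω : Type*} [MeasurableSpace Ω] (μ : Measure Ω) (p q : Ω → ℝ) : ℝ :=
  (1 / 2) * (KLdiv μ p (fun x => (p x + q x) / 2) + KLdiv μ q (fun x => (p x + q x) / 2))

/-- Square root of the Jensen–Shannon divergence. -/
noncomputable def dJS {Ω : Type*} [MeasurableSpace Ω] (μ : Measure Ω) (p q : Ω → ℝ) : ℝ :=
  Real.sqrt (JSdiv μ p q)

/-- Total variation distance between densities. -/
noncomputable def TVdist {Ω : Type*} [MeasurableSpace Ω] (μ : Measure Ω) (p q : Ω → ℝ) : ℝ :=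
  (1 / 2) * ∫ x, |p x - q x| ∂μ

/-!
For `a, b ≥ 0` the pointwise Jensen–Shannon integrand has the representation
`(a log (2a/(a+b)) + b log (2b/(a+b))) / 2 = ∫₀^∞ ((e^{-sa} - e^{-sb}) / (2s))² ds`.
To see it, write `(e^{-sa} - e^{-sb}) / s = ∫_a^b e^{-st} dt`, square, and integrate in `s` first
(Tonelli): what remains is `∫∫_{[a,b]²} dt du / (t + u)`, an elementary integral.
Hence `√JS(p, q)` is the `L²` norm of `(x, s) ↦ (e^{-s p(x)} - e^{-s q(x)}) / (2s)`, and the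
triangle inequality is Minkowski's inequality, used once in `s` and once in `x`.
-/

open Real Set

section Minkowski

variable {α : Type*} [MeasurableSpace α] {μ : Measure α}

lemma ENNReal.ofReal_sqrt_rpow_two (y : ℝ) : ENNReal.ofReal √y ^ (2 : ℝ) = ENNReal.ofReal y := by
  rw [ENNReal.ofReal_rpow_of_nonneg (sqrt_nonneg y) zero_le_two, Real.rpow_two, Real.sq_sqrt',
    ENNReal.ofReal_max, ENNReal.ofReal_zero, max_zero]

lemma ENNReal.ofReal_rpow_half (y : ℝ) : ENNReal.ofReal y ^ (1 / 2 : ℝ) = ENNReal.ofReal √y := by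
  rcases le_or_gt 0 y with hy | hy
  · rw [ENNReal.ofReal_rpow_of_nonneg hy (by norm_num), sqrt_eq_rpow]
  · rw [ENNReal.ofReal_of_nonpos hy.le, sqrt_eq_zero'.2 hy.le, ENNReal.ofReal_zero,
      ENNReal.zero_rpow_of_pos (by norm_num)]

theorem lintegral_ofReal_rpow_half_le_of_sqrt_le {F G H : α → ℝ} (hF : AEMeasurable F μ)
    (hG : AEMeasurable G μ) (h : ∀ x, √(H x) ≤ √(F x) + √(G x)) :
    (∫⁻ x, ENNReal.ofReal (H x) ∂μ) ^ (1 / 2 : ℝ) ≤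
      (∫⁻ x, ENNReal.ofReal (F x) ∂μ) ^ (1 / 2 : ℝ) +
        (∫⁻ x, ENNReal.ofReal (G x) ∂μ) ^ (1 / 2 : ℝ) := by
  set f : α → ENNReal := fun x => ENNReal.ofReal √(F x)
  set g : α → ENNReal := fun x => ENNReal.ofReal √(G x)
  have hfg : ∀ x, ENNReal.ofReal √(H x) ≤ (f + g) x := fun x => by
    rw [Pi.add_apply, ← ENNReal.ofReal_add (sqrt_nonneg _) (sqrt_nonneg _)]
    exact ENNReal.ofReal_le_ofReal (h x)
  calc (∫⁻ x, ENNReal.ofReal (H x) ∂μ) ^ (1 / 2 : ℝ)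
      = (∫⁻ x, ENNReal.ofReal √(H x) ^ (2 : ℝ) ∂μ) ^ (1 / 2 : ℝ) := by
        simp only [ENNReal.ofReal_sqrt_rpow_two]
    _ ≤ (∫⁻ x, (f + g) x ^ (2 : ℝ) ∂μ) ^ (1 / 2 : ℝ) := by gcongr with x; exact hfg x
    _ ≤ (∫⁻ x, f x ^ (2 : ℝ) ∂μ) ^ (1 / 2 : ℝ) + (∫⁻ x, g x ^ (2 : ℝ) ∂μ) ^ (1 / 2 : ℝ) :=
        ENNReal.lintegral_Lp_add_le hF.sqrt.ennreal_ofReal hG.sqrt.ennreal_ofReal one_le_two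
    _ = _ := by simp only [f, g, ENNReal.ofReal_sqrt_rpow_two]

theorem sqrt_le_of_ofReal_rpow_half_le {x y z : ℝ}
    (h : ENNReal.ofReal z ^ (1 / 2 : ℝ) ≤
      ENNReal.ofReal x ^ (1 / 2 : ℝ) + ENNReal.ofReal y ^ (1 / 2 : ℝ)) :
    √z ≤ √x + √y := by
  rwa [ENNReal.ofReal_rpow_half, ENNReal.ofReal_rpow_half, ENNReal.ofReal_rpow_half,
    ← ENNReal.ofReal_add (sqrt_nonneg _) (sqrt_nonneg _),
    ENNReal.ofReal_le_ofReal_iff (by positivity)] at h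

theorem sqrt_integral_le_of_sqrt_le {F G H : α → ℝ} (hF : Integrable F μ) (hG : Integrable G μ)
    (hH : Integrable H μ) (hF0 : 0 ≤ F) (hG0 : 0 ≤ G) (hH0 : 0 ≤ H)
    (h : ∀ x, √(H x) ≤ √(F x) + √(G x)) :
    √(∫ x, H x ∂μ) ≤ √(∫ x, F x ∂μ) + √(∫ x, G x ∂μ) := by
  apply sqrt_le_of_ofReal_rpow_half_le
  rw [ofReal_integral_eq_lintegral_ofReal hF (.of_forall hF0),
    ofReal_integral_eq_lintegral_ofReal hG (.of_forall hG0),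
    ofReal_integral_eq_lintegral_ofReal hH (.of_forall hH0)]
  exact lintegral_ofReal_rpow_half_le_of_sqrt_le hF.aemeasurable hG.aemeasurable h

end Minkowski

noncomputable def jsIntegrand (a b : ℝ) : ℝ :=
  (a * log (a / ((a + b) / 2)) + b * log (b / ((a + b) / 2))) / 2

lemma jsIntegrand_comm (a b : ℝ) : jsIntegrand a b = jsIntegrand b a := by
  rw [jsIntegrand, jsIntegrand, add_comm a b, add_comm (a * _)]

lemma sub_le_mul_log_div {x m : ℝ} (hx : 0 ≤ x) (hm : 0 < m) : x - m ≤ x * log (x / m) := by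
  rcases hx.eq_or_lt with rfl | hx
  · simpa using hm.le
  have h := one_sub_inv_le_log_of_pos (div_pos hx hm)
  rw [inv_div] at h
  calc x - m = x * (1 - m / x) := by field_simp
    _ ≤ x * log (x / m) := by gcongr

lemma abs_mul_log_div_midpoint_le {a b : ℝ} (ha : 0 ≤ a) (hb : 0 ≤ b) :
    |a * log (a / ((a + b) / 2))| ≤ a + b := by
  rcases ha.eq_or_lt with rfl | ha
  · simpa using hb
  have hm : 0 < (a + b) / 2 := by positivity
  have hlog : log (a / ((a + b) / 2)) ≤ 1 := by
    refine (log_le_sub_one_of_pos (by positivity)).trans ?_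
    rw [sub_le_iff_le_add, div_le_iff₀ hm]
    linarith
  rw [abs_le]
  constructor
  · linarith [sub_le_mul_log_div ha.le hm]
  · nlinarith

lemma mul_log_div_eq (x : ℝ) {y : ℝ} (hy : y ≠ 0) : x * log (x / y) = x * log x - x * log y := by
  rcases eq_or_ne x 0 with rfl | hx
  · simp
  · rw [log_div hx hy]
    ring

lemma jsIntegrand_nonneg {a b : ℝ} (ha : 0 ≤ a) (hb : 0 ≤ b) : 0 ≤ jsIntegrand a b := by
  rcases (add_nonneg ha hb).eq_or_lt with hab | hab
  · obtain ⟨rfl, rfl⟩ : a = 0 ∧ b = 0 := ⟨by linarith, by linarith⟩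
    simp [jsIntegrand]
  have hm : 0 < (a + b) / 2 := by positivity
  have hpa := sub_le_mul_log_div ha hm
  have hpb := sub_le_mul_log_div hb hm
  unfold jsIntegrand
  linarith

section Integrals

variable {α : Type*} [MeasurableSpace α] {μ : Measure α} {p q : α → ℝ}

lemma integrable_mul_log_div_midpoint_left (hp : Measurable p) (hq : Measurable q) (hp0 : 0 ≤ p)
    (hq0 : 0 ≤ q) (hpi : Integrable p μ) (hqi : Integrable q μ) :
    Integrable (fun x => p x * log (p x / ((p x + q x) / 2))) μ :=
  (hpi.add hqi).mono' (by fun_prop)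
    (.of_forall fun x => (norm_eq_abs _).trans_le (abs_mul_log_div_midpoint_le (hp0 x) (hq0 x)))

lemma integrable_mul_log_div_midpoint_right (hp : Measurable p) (hq : Measurable q)
    (hp0 : 0 ≤ p) (hq0 : 0 ≤ q) (hpi : Integrable p μ) (hqi : Integrable q μ) :
    Integrable (fun x => q x * log (q x / ((p x + q x) / 2))) μ := by
  simpa only [add_comm (q _)] using integrable_mul_log_div_midpoint_left hq hp hq0 hp0 hqi hpi

lemma integrable_jsIntegrand (hp : Measurable p) (hq : Measurable q) (hp0 : 0 ≤ p)
    (hq0 : 0 ≤ q) (hpi : Integrable p μ) (hqi : Integrable q μ) :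
    Integrable (fun x => jsIntegrand (p x) (q x)) μ :=
  ((integrable_mul_log_div_midpoint_left hp hq hp0 hq0 hpi hqi).add
    (integrable_mul_log_div_midpoint_right hp hq hp0 hq0 hpi hqi)).div_const 2

theorem JSdiv_eq_integral_jsIntegrand (hp : Measurable p) (hq : Measurable q) (hp0 : 0 ≤ p)
    (hq0 : 0 ≤ q) (hpi : Integrable p μ) (hqi : Integrable q μ) :
    JSdiv μ p q = ∫ x, jsIntegrand (p x) (q x) ∂μ := by
  rw [JSdiv, KLdiv, KLdiv,
    ← integral_add (integrable_mul_log_div_midpoint_left hp hq hp0 hq0 hpi hqi)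
      (integrable_mul_log_div_midpoint_right hp hq hp0 hq0 hpi hqi),
    ← integral_const_mul]
  simp only [jsIntegrand]
  congr with x
  ring

end Integrals

lemma lintegral_exp_neg_mul_Ioi {r : ℝ} (hr : 0 < r) :
    ∫⁻ s in Ioi 0, ENNReal.ofReal (exp (-(s * r))) = ENNReal.ofReal r⁻¹ := by
  have hint : IntegrableOn (fun s => exp (-(s * r))) (Ioi 0) := by
    simpa only [neg_mul, mul_comm r] using exp_neg_integrableOn_Ioi 0 hr
  rw [← ofReal_integral_eq_lintegral_ofReal hint (.of_forall fun _ => (exp_pos _).le)]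
  have h := integral_exp_mul_Ioi (neg_lt_zero.2 hr) 0
  simp only [neg_mul, mul_comm r] at h
  rw [h, zero_mul, neg_zero, exp_zero, div_neg, neg_div, neg_neg, one_div]

lemma ofReal_sub_exp_div_eq_setLIntegral {s α β : ℝ} (hs : 0 < s) (hαβ : α ≤ β) :
    ENNReal.ofReal ((exp (-(s * α)) - exp (-(s * β))) / s) =
      ∫⁻ t in Ioc α β, ENNReal.ofReal (exp (-(s * t))) := by
  have hderiv : ∀ t, HasDerivAt (fun t => -(exp (-(s * t)) / s)) (exp (-(s * t))) t := fun t => by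
    have h : HasDerivAt (fun t => -(s * t)) (-s) t := by
      simpa using ((hasDerivAt_id' t).const_mul s).fun_neg
    exact (h.exp.div_const s).fun_neg.congr_deriv (by field_simp)
  rw [← ofReal_integral_eq_lintegral_ofReal (by fun_prop : Continuous _).integrableOn_Ioc
      (.of_forall fun _ => (exp_pos _).le), ← intervalIntegral.integral_of_le hαβ,
    intervalIntegral.integral_eq_sub_of_hasDerivAt (fun t _ => hderiv t)
      ((by fun_prop : Continuous _).intervalIntegrable _ _)]
  ring_nf

lemma ofReal_sq_sub_exp_div_eq_setLIntegral {s α β : ℝ} (hs : 0 < s) (hαβ : α ≤ β) :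
    ENNReal.ofReal (((exp (-(s * α)) - exp (-(s * β))) / s) ^ 2) =
      ∫⁻ t in Ioc α β, ∫⁻ u in Ioc α β, ENNReal.ofReal (exp (-(s * (t + u)))) := by
  have hnonneg : 0 ≤ (exp (-(s * α)) - exp (-(s * β))) / s := by
    have : exp (-(s * β)) ≤ exp (-(s * α)) := exp_le_exp.2 (by nlinarith)
    exact div_nonneg (sub_nonneg.2 this) hs.le
  have hmeas : Measurable fun t => ENNReal.ofReal (exp (-(s * t))) := by fun_prop
  rw [ENNReal.ofReal_pow hnonneg, sq, ofReal_sub_exp_div_eq_setLIntegral hs hαβ,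
    ← lintegral_lintegral_mul hmeas.aemeasurable hmeas.aemeasurable]
  congr! 4 with t u
  rw [← ENNReal.ofReal_mul (exp_pos _).le, ← exp_add]
  ring_nf

lemma lintegral_sq_sub_exp_div_eq_lintegral_inv_add {α β : ℝ} (hα : 0 ≤ α) (hαβ : α ≤ β) :
    ∫⁻ s in Ioi 0, ENNReal.ofReal (((exp (-(s * α)) - exp (-(s * β))) / s) ^ 2) =
      ∫⁻ t in Ioc α β, ∫⁻ u in Ioc α β, ENNReal.ofReal (t + u)⁻¹ := by
  calc _ = ∫⁻ s in Ioi 0, ∫⁻ t in Ioc α β, ∫⁻ u in Ioc α β,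
        ENNReal.ofReal (exp (-(s * (t + u)))) :=
        setLIntegral_congr_fun measurableSet_Ioi fun s hs =>
          ofReal_sq_sub_exp_div_eq_setLIntegral hs hαβ
    _ = ∫⁻ t in Ioc α β, ∫⁻ u in Ioc α β, ∫⁻ s in Ioi 0,
        ENNReal.ofReal (exp (-(s * (t + u)))) := by
      have hF : Measurable fun z : (ℝ × ℝ) × ℝ =>
          ENNReal.ofReal (exp (-(z.1.1 * (z.1.2 + z.2)))) := by
        fun_prop
      rw [lintegral_lintegral_swap hF.lintegral_prod_right'.aemeasurable]
      refine lintegral_congr fun t => ?_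
      exact lintegral_lintegral_swap (f := fun s u => ENNReal.ofReal (exp (-(s * (t + u)))))
        (by fun_prop)
    _ = _ := setLIntegral_congr_fun measurableSet_Ioc fun t ht =>
        setLIntegral_congr_fun measurableSet_Ioc fun u hu =>
          lintegral_exp_neg_mul_Ioi (by linarith [ht.1, hu.1])

lemma setLIntegral_inv_add_Ioc {t α β : ℝ} (ht : 0 < t + α) (hαβ : α ≤ β) :
    ∫⁻ u in Ioc α β, ENNReal.ofReal (t + u)⁻¹ = ENNReal.ofReal (log (t + β) - log (t + α)) := by
  have hcont : ContinuousOn (fun u => (t + u)⁻¹) (Icc α β) :=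
    (continuousOn_const.add continuousOn_id).inv₀ fun u hu => by
      simp only [Pi.add_apply, id]; linarith [hu.1]
  have hnonneg : 0 ≤ᵐ[volume.restrict (Ioc α β)] fun u => (t + u)⁻¹ := by
    filter_upwards [ae_restrict_mem measurableSet_Ioc] with u hu
    exact inv_nonneg.2 (by linarith [hu.1])
  rw [← ofReal_integral_eq_lintegral_ofReal (hcont.integrableOn_Icc.mono_set Ioc_subset_Icc_self)
    hnonneg, ← intervalIntegral.integral_of_le hαβ,
    intervalIntegral.integral_comp_add_left (fun x => x⁻¹) t,
    integral_inv_of_pos ht (by linarith), log_div (by linarith) ht.ne']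

lemma setLIntegral_log_add_sub_log_add {α β : ℝ} (hα : 0 ≤ α) (hαβ : α ≤ β) :
    ∫⁻ t in Ioc α β, ENNReal.ofReal (log (t + β) - log (t + α)) =
      ENNReal.ofReal (4 * jsIntegrand α β) := by
  have hint : ∀ c, IntervalIntegrable (fun t => log (t + c)) volume α β := fun c =>
    (IntervalIntegrable.comp_add_right_iff (by simp)).2 intervalIntegral.intervalIntegrable_log'
  have hnonneg : 0 ≤ᵐ[volume.restrict (Ioc α β)] fun t => log (t + β) - log (t + α) := by
    filter_upwards [ae_restrict_mem measurableSet_Ioc] with t ht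
    exact sub_nonneg.2 (log_le_log (by linarith [ht.1]) (by linarith))
  rw [← ofReal_integral_eq_lintegral_ofReal ((hint β).sub (hint α)).1 hnonneg,
    ← intervalIntegral.integral_of_le hαβ, intervalIntegral.integral_sub (hint β) (hint α),
    intervalIntegral.integral_comp_add_right log β, intervalIntegral.integral_comp_add_right log α,
    integral_log, integral_log]
  congr 1
  rcases (hα.trans hαβ).eq_or_lt with hβ | hβ
  · obtain rfl : α = 0 := by linarith
    subst hβ
    simp [jsIntegrand]
  have hsum : α + β ≠ 0 := by positivity
  have h4 : 4 * jsIntegrand α β =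
      (α * 2) * log (α * 2 / (α + β)) + (β * 2) * log (β * 2 / (α + β)) := by
    simp only [jsIntegrand, div_div_eq_mul_div]
    ring
  rw [h4, mul_log_div_eq _ hsum, mul_log_div_eq _ hsum]
  ring_nf

lemma lintegral_sq_sub_exp_div_eq_four_mul_jsIntegrand {α β : ℝ} (hα : 0 ≤ α) (hαβ : α ≤ β) :
    ∫⁻ s in Ioi 0, ENNReal.ofReal (((exp (-(s * α)) - exp (-(s * β))) / s) ^ 2) =
      ENNReal.ofReal (4 * jsIntegrand α β) := by
  rw [lintegral_sq_sub_exp_div_eq_lintegral_inv_add hα hαβ,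
    ← setLIntegral_log_add_sub_log_add hα hαβ]
  exact setLIntegral_congr_fun measurableSet_Ioc fun t ht =>
    setLIntegral_inv_add_Ioc (by linarith [ht.1]) hαβ

theorem ofReal_jsIntegrand_eq_lintegral {a b : ℝ} (ha : 0 ≤ a) (hb : 0 ≤ b) :
    ENNReal.ofReal (jsIntegrand a b) =
      ∫⁻ s in Ioi 0, ENNReal.ofReal (((exp (-(s * a)) - exp (-(s * b))) / (2 * s)) ^ 2) := by
  wlog hab : a ≤ b generalizing a b
  · rw [jsIntegrand_comm, this hb ha (le_of_not_ge hab)]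
    congr! 3 with s
    ring
  have hquarter : ∀ x s : ℝ, ENNReal.ofReal ((x / (2 * s)) ^ 2) =
      ENNReal.ofReal (1 / 4) * ENNReal.ofReal ((x / s) ^ 2) := fun x s => by
    rw [← ENNReal.ofReal_mul (by norm_num)]
    ring_nf
  simp only [hquarter]
  rw [lintegral_const_mul _ (by fun_prop),
    lintegral_sq_sub_exp_div_eq_four_mul_jsIntegrand ha hab, ← ENNReal.ofReal_mul (by norm_num)]
  ring_nf

theorem sqrt_jsIntegrand_le {a b c : ℝ} (ha : 0 ≤ a) (hb : 0 ≤ b) (hc : 0 ≤ c) :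
    √(jsIntegrand a c) ≤ √(jsIntegrand a b) + √(jsIntegrand b c) := by
  apply sqrt_le_of_ofReal_rpow_half_le
  rw [ofReal_jsIntegrand_eq_lintegral ha hb, ofReal_jsIntegrand_eq_lintegral hb hc,
    ofReal_jsIntegrand_eq_lintegral ha hc]
  refine lintegral_ofReal_rpow_half_le_of_sqrt_le (by fun_prop) (by fun_prop) fun s => ?_
  simp only [sqrt_sq_eq_abs, sub_div]
  exact abs_sub_le _ _ _

theorem IsProbDensity.integrable {Ω : Type*} [MeasurableSpace Ω] {μ : Measure Ω} {p : Ω → ℝ}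
    (hp : IsProbDensity μ p) : Integrable p μ :=
  Integrable.of_integral_ne_zero (hp.2.2 ▸ one_ne_zero)

theorem dJS_triangle_general {Ω : Type*} [MeasurableSpace Ω] (μ : Measure Ω)
    (p q r : Ω → ℝ) (hp : IsProbDensity μ p) (hq : IsProbDensity μ q)
    (hr : IsProbDensity μ r) :
    dJS μ p r ≤ dJS μ p q + dJS μ q r := by
  have hpi := hp.integrable
  have hqi := hq.integrable
  have hri := hr.integrable
  obtain ⟨hpm, hp0, -⟩ := hp
  obtain ⟨hqm, hq0, -⟩ := hq
  obtain ⟨hrm, hr0, -⟩ := hr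
  rw [dJS, dJS, dJS, JSdiv_eq_integral_jsIntegrand hpm hrm hp0 hr0 hpi hri,
    JSdiv_eq_integral_jsIntegrand hpm hqm hp0 hq0 hpi hqi,
    JSdiv_eq_integral_jsIntegrand hqm hrm hq0 hr0 hqi hri]
  exact sqrt_integral_le_of_sqrt_le (integrable_jsIntegrand hpm hqm hp0 hq0 hpi hqi)
    (integrable_jsIntegrand hqm hrm hq0 hr0 hqi hri)
    (integrable_jsIntegrand hpm hrm hp0 hr0 hpi hri)
    (fun x => jsIntegrand_nonneg (hp0 x) (hq0 x)) (fun x => jsIntegrand_nonneg (hq0 x) (hr0 x))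
    (fun x => jsIntegrand_nonneg (hp0 x) (hr0 x))
    (fun x => sqrt_jsIntegrand_le (hp0 x) (hq0 x) (hr0 x))

/-- The square root of the Jensen–Shannon divergence satisfies the triangle inequality. -/
theorem dJS_triangle {Ω : Type*} [MeasurableSpace Ω] (μ : Measure Ω) [SigmaFinite μ]
    (p q r : Ω → ℝ) (hp : IsProbDensity μ p) (hq : IsProbDensity μ q)
    (hr : IsProbDensity μ r) :
    dJS μ p r ≤ dJS μ p q + dJS μ q r :=
  dJS_triangle_general μ p q r hp hq hr
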